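/- arXiv:math/0701035 — 4 statements merged into one kernel-verified Lean document; each statement's English description precedes it below -/
import Mathlib

section
/- Let X be a nonempty path connected compact metric space, let F ⊆ C(X, ℝ) be a finite subset and let ε > 0. Then there exists a positive integer N with the following property: for every compact metric space Y and every unital positive linear map ξ : C(X, ℝ) → C(Y, ℝ), there exist continuous maps g₁, …, g_N : Y → X, each of which is homotopic to a constant map, such that |ξ(f)(y) − (1/N) Σ_{i=1}^N f(gᵢ(y))| < ε for all f ∈ F and all y ∈ Y. (Theorem 1.2 of the paper, due to Li; unital *-homomorphisms C(X) → C(Y) correspond to continuous maps Y → X, and a *-homomorphism is homotopy equivalent to a point evaluation exactly when the corresponding continuous map is homotopic to a constant map.) -/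
open Finset

noncomputable section LiProof

def clamp01 (r : ℝ) : ℝ := max 0 (min 1 r)

lemma clamp01_of_one_le {r : ℝ} (h : 1 ≤ r) : clamp01 r = 1 := by
  unfold clamp01; rw [min_eq_left h, max_eq_right zero_le_one]

lemma clamp01_of_nonpos {r : ℝ} (h : r ≤ 0) : clamp01 r = 0 := by
  unfold clamp01; rw [min_eq_right (h.trans zero_le_one), max_eq_left h]

def cum {m : ℕ} (t : Fin m → ℝ) (n : ℕ) : ℝ :=
  ∑ j ∈ Finset.range n, if h : j < m then t ⟨j, h⟩ else 0

def betaFn {m : ℕ} (t : Fin m → ℝ) (w s : ℝ) : ℝ :=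
  ∑ k ∈ Finset.range (m - 1), clamp01 ((s - cum t (k + 1)) / w + 1)

variable {m : ℕ} {t : Fin m → ℝ}

lemma cum_nonneg (ht0 : ∀ k, 0 ≤ t k) (n : ℕ) : 0 ≤ cum t n := by
  refine Finset.sum_nonneg fun j _ => ?_
  by_cases h : j < m <;> simp [cum, h, ht0]

lemma cum_mono (ht0 : ∀ k, 0 ≤ t k) : Monotone (cum t) := by
  intro a b hab
  refine Finset.sum_le_sum_of_subset_of_nonneg (Finset.range_subset_range.mpr hab) fun j _ _ => ?_
  by_cases h : j < m <;> simp [h, ht0]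

lemma cum_self : cum t m = ∑ k, t k := by
  rw [cum, ← Fin.sum_univ_eq_sum_range (fun j => if h : j < m then t ⟨j, h⟩ else 0) m]
  exact Finset.sum_congr rfl fun j _ => by simp [j.isLt]

lemma cum_le_one (ht0 : ∀ k, 0 ≤ t k) (ht1 : ∑ k, t k = 1) {n : ℕ} (hn : n ≤ m) :
    cum t n ≤ 1 := by
  calc cum t n ≤ cum t m := cum_mono ht0 hn
  _ = 1 := by rw [cum_self, ht1]

lemma cum_succ_fin (k : Fin m) : cum t ((k : ℕ) + 1) = cum t k + t k := by
  rw [cum, Finset.sum_range_succ, ← cum]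
  simp [k.isLt]

lemma betaFn_eq {w : ℝ} (hw : 0 < w) (ht0 : ∀ k, 0 ≤ t k) (k : Fin m) {s : ℝ}
    (h1 : cum t k ≤ s) (h2 : s ≤ cum t ((k : ℕ) + 1) - w) :
    betaFn t w s = (k : ℕ) := by
  have hkm : (k : ℕ) ≤ m - 1 := by omega
  have key : ∀ j ∈ Finset.range (m - 1),
      clamp01 ((s - cum t (j + 1)) / w + 1) = if j < (k : ℕ) then 1 else 0 := by
    intro j hj
    by_cases h : j < (k : ℕ)
    · rw [if_pos h]
      apply clamp01_of_one_le
      have : cum t (j + 1) ≤ cum t k := cum_mono ht0 (by omega)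
      have hnum : 0 ≤ (s - cum t (j + 1)) / w := div_nonneg (by linarith) hw.le
      linarith
    · rw [if_neg h]
      apply clamp01_of_nonpos
      have hc : cum t ((k : ℕ) + 1) ≤ cum t (j + 1) := cum_mono ht0 (by omega)
      have : (s - cum t (j + 1)) / w ≤ -1 := by
        rw [div_le_iff₀ hw]; linarith
      linarith
  rw [betaFn, Finset.sum_congr rfl key, Finset.sum_boole]
  have hfilter : (Finset.range (m - 1)).filter (fun j => j < (k : ℕ)) = Finset.range (k : ℕ) := by
    ext j
    simp only [Finset.mem_filter, Finset.mem_range]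
    omega
  rw [hfilter, Finset.card_range]

lemma grid_card_eq (L : ℕ) (hL : 0 < L) (a b : ℝ) (hb : b ≤ 1) :
    (Finset.univ.filter
      (fun i : Fin L => a ≤ (((i : ℕ) : ℝ) + 1) / L ∧ (((i : ℕ) : ℝ) + 1) / L ≤ b)).card
      = (Finset.Icc (max 1 ⌈a * L⌉₊) ⌊b * L⌋₊).card := by
  have hL' : (0 : ℝ) < L := by exact_mod_cast hL
  apply Finset.card_bij (fun (i : Fin L) _ => (i : ℕ) + 1)
  · rintro i hi
    simp only [Finset.mem_filter, Finset.mem_univ, true_and] at hi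
    obtain ⟨h1, h2⟩ := hi
    rw [le_div_iff₀ hL'] at h1
    rw [div_le_iff₀ hL'] at h2
    simp only [Finset.mem_Icc, max_le_iff]
    refine ⟨⟨Nat.one_le_iff_ne_zero.mpr (by omega), Nat.ceil_le.mpr (by exact_mod_cast h1)⟩, ?_⟩
    exact Nat.le_floor (by exact_mod_cast h2)
  · intro i _ j _ h
    have : (i : ℕ) = (j : ℕ) := by omega
    exact Fin.ext this
  · intro n hn
    simp only [Finset.mem_Icc, max_le_iff] at hn
    obtain ⟨⟨hn1, hna⟩, hnb⟩ := hn
    have hbL : (0 : ℝ) ≤ b * L := by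
      have hpos : 0 < ⌊b * L⌋₊ := lt_of_lt_of_le hn1 hnb
      have h1 : (1 : ℝ) ≤ b * L := (Nat.one_le_floor_iff _).mp hpos
      linarith
    have hnR : (n : ℝ) ≤ b * L := (Nat.le_floor_iff hbL).mp hnb
    have hnL : n ≤ L := by
      have hbl : b * L ≤ L := mul_le_of_le_one_left hL'.le hb
      exact_mod_cast hnR.trans hbl
    have hi : n - 1 < L := by omega
    refine ⟨⟨n - 1, hi⟩, ?_, by simp; omega⟩
    simp only [Finset.mem_filter, Finset.mem_univ, true_and]
    have hcast : ((((⟨n - 1, hi⟩ : Fin L) : ℕ) : ℝ) + 1) = (n : ℝ) := by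
      simp only []
      push_cast [Nat.cast_sub hn1]
      ring
    rw [hcast]
    constructor
    · rw [le_div_iff₀ hL']
      exact le_trans (Nat.le_ceil _) (by exact_mod_cast hna)
    · rw [div_le_iff₀ hL']
      exact hnR

lemma grid_card_lower (L : ℕ) (hL : 0 < L) (a b : ℝ) (ha : 0 ≤ a) (hb : b ≤ 1) :
    (L : ℝ) * (b - a) - 1 ≤
    ((Finset.univ.filter
      (fun i : Fin L => a ≤ (((i : ℕ) : ℝ) + 1) / L ∧ (((i : ℕ) : ℝ) + 1) / L ≤ b)).card : ℝ) := by
  rw [grid_card_eq L hL a b hb, Nat.card_Icc]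
  have hL' : (0 : ℝ) < L := by exact_mod_cast hL
  have haL : (0:ℝ) ≤ a * L := by positivity
  set u : ℕ := max 1 ⌈a * L⌉₊ with hu
  set v : ℕ := ⌊b * L⌋₊ with hv
  have hceil : (⌈a * L⌉₊ : ℝ) < a * L + 1 := Nat.ceil_lt_add_one haL
  have humax : (u : ℝ) ≤ a * L + 1 := by
    rcases max_cases 1 ⌈a * L⌉₊ with ⟨h, _⟩ | ⟨h, _⟩ <;> rw [hu, h]
    · norm_num; linarith
    · linarith
  have hfloor : b * L < (v : ℝ) + 1 := by
    have := Nat.lt_floor_add_one (b * L); rw [← hv] at this; exact_mod_cast this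
  rcases le_or_gt u (v + 1) with h | h
  · rw [Nat.cast_sub h]
    have : ((v + 1 : ℕ) : ℝ) = (v : ℝ) + 1 := by push_cast; ring
    rw [this]
    nlinarith
  · rw [Nat.sub_eq_zero_of_le h.le]
    have hc : ((v : ℝ) + 1) ≤ (u : ℝ) := by exact_mod_cast h.le
    norm_num
    nlinarith

lemma grid_card_upper (L : ℕ) (hL : 0 < L) (a b : ℝ) (ha : 0 ≤ a) (hab : a ≤ b) (hb : b ≤ 1) :
    ((Finset.univ.filter
      (fun i : Fin L => a ≤ (((i : ℕ) : ℝ) + 1) / L ∧ (((i : ℕ) : ℝ) + 1) / L ≤ b)).card : ℝ)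
      ≤ (L : ℝ) * (b - a) + 1 := by
  rw [grid_card_eq L hL a b hb, Nat.card_Icc]
  have hL' : (0 : ℝ) < L := by exact_mod_cast hL
  have hbL : (0:ℝ) ≤ b * L := mul_nonneg (ha.trans hab) hL'.le
  set u : ℕ := max 1 ⌈a * L⌉₊ with hu
  set v : ℕ := ⌊b * L⌋₊ with hv
  have hfloor : (v : ℝ) ≤ b * L := Nat.floor_le hbL
  have humax : a * L ≤ (u : ℝ) := by
    have h1 := Nat.le_ceil (a * L)
    have h2 : (⌈a * L⌉₊ : ℝ) ≤ (u : ℝ) := by exact_mod_cast le_max_right 1 ⌈a * L⌉₊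
    linarith
  rcases le_or_gt u (v + 1) with h | h
  · rw [Nat.cast_sub h]
    have : ((v + 1 : ℕ) : ℝ) = (v : ℝ) + 1 := by push_cast; ring
    rw [this]
    nlinarith
  · rw [Nat.sub_eq_zero_of_le h.le]
    norm_num
    nlinarith


lemma discretize {X : Type*} [TopologicalSpace X] {m L : ℕ} (hm : 0 < m) (hL : 0 < L)
    (p : Fin m → X) (Γ : C(ℝ, X)) (hΓ : ∀ k : Fin m, Γ ((k : ℕ) : ℝ) = p k)
    {w : ℝ} (hw : 0 < w) (t : Fin m → ℝ) (ht0 : ∀ k, 0 ≤ t k) (ht1 : ∑ k, t k = 1)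
    (f : X → ℝ) (B : ℝ) (hB : ∀ x, |f x| ≤ B) :
    |∑ k, t k * f (p k) -
        (1 / L : ℝ) * ∑ i : Fin L, f (Γ (betaFn t w ((((i : ℕ) : ℝ) + 1) / L)))|
      ≤ 2 * B * m * (w + 1 / L) := by
  classical
  have hL' : (0 : ℝ) < L := by exact_mod_cast hL
  have hB0 : 0 ≤ B := le_trans (abs_nonneg _) (hB (p ⟨0, hm⟩))
  set s : Fin L → ℝ := fun i => (((i : ℕ) : ℝ) + 1) / L with hs
  set good : Fin m → Finset (Fin L) :=
    fun k => Finset.univ.filter (fun i => cum t k ≤ s i ∧ s i ≤ cum t ((k : ℕ) + 1) - w)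
    with hgood
  have hcum0 : ∀ n, 0 ≤ cum t n := cum_nonneg ht0
  have hcum1 : ∀ n, n ≤ m → cum t n ≤ 1 := fun n hn => cum_le_one ht0 ht1 hn
  have hval : ∀ k : Fin m, ∀ i ∈ good k, f (Γ (betaFn t w (s i))) = f (p k) := by
    intro k i hi
    simp only [hgood, Finset.mem_filter] at hi
    rw [betaFn_eq hw ht0 k hi.2.1 hi.2.2, hΓ]
  have hdisj' : ∀ k₁ k₂ : Fin m, (k₁ : ℕ) < (k₂ : ℕ) → Disjoint (good k₁) (good k₂) := by
    intro k₁ k₂ hlt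
    rw [Finset.disjoint_left]
    intro i hi1 hi2
    simp only [hgood, Finset.mem_filter] at hi1 hi2
    have : cum t ((k₁ : ℕ) + 1) ≤ cum t k₂ := cum_mono ht0 (by omega)
    linarith [hi1.2.2, hi2.2.1]
  have hdisj : ∀ k₁ ∈ (Finset.univ : Finset (Fin m)), ∀ k₂ ∈ Finset.univ, k₁ ≠ k₂ →
      Disjoint (good k₁) (good k₂) := by
    intro k₁ _ k₂ _ hne
    rcases Nat.lt_or_ge (k₁ : ℕ) (k₂ : ℕ) with h | h
    · exact hdisj' k₁ k₂ h
    · rcases Nat.lt_or_ge (k₂ : ℕ) (k₁ : ℕ) with h2 | h2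
      · exact (hdisj' k₂ k₁ h2).symm
      · exact absurd (Fin.ext (by omega)) hne
  have hlow : ∀ k : Fin m, (L : ℝ) * (t k - w) - 1 ≤ ((good k).card : ℝ) := by
    intro k
    have hEq : good k = Finset.univ.filter
        (fun i : Fin L => cum t (k:ℕ) ≤ (((i : ℕ) : ℝ) + 1) / L ∧
          (((i : ℕ) : ℝ) + 1) / L ≤ cum t ((k : ℕ) + 1) - w) := by
      ext i; simp [hgood, hs]
    have h' := grid_card_lower L hL (cum t (k:ℕ)) (cum t ((k : ℕ) + 1) - w) (hcum0 _)
      (by linarith [hcum1 _ (by omega : (k : ℕ) + 1 ≤ m)])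
    rw [hEq]
    have hsucc := cum_succ_fin (t := t) k
    nlinarith [h']
  have hup : ∀ k : Fin m, ((good k).card : ℝ) ≤ (L : ℝ) * t k + 1 := by
    intro k
    have hEq : Finset.univ.filter
        (fun i : Fin L => cum t (k:ℕ) ≤ (((i : ℕ) : ℝ) + 1) / L ∧
          (((i : ℕ) : ℝ) + 1) / L ≤ cum t ((k : ℕ) + 1))
        = Finset.univ.filter (fun i : Fin L => cum t (k:ℕ) ≤ s i ∧ s i ≤ cum t ((k : ℕ) + 1)) := by
      ext i; simp [hs]
    have hsub : good k ⊆ Finset.univ.filter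
        (fun i : Fin L => cum t (k:ℕ) ≤ s i ∧ s i ≤ cum t ((k : ℕ) + 1)) := by
      intro i hi
      simp only [hgood, Finset.mem_filter] at hi ⊢
      exact ⟨hi.1, hi.2.1, by linarith [hi.2.2]⟩
    have h' := grid_card_upper L hL (cum t (k:ℕ)) (cum t ((k : ℕ) + 1)) (hcum0 _)
      (cum_mono ht0 (by omega)) (hcum1 _ (by omega : (k : ℕ) + 1 ≤ m))
    rw [hEq] at h'
    have hcard : ((good k).card : ℝ) ≤ ((Finset.univ.filter
        (fun i : Fin L => cum t (k:ℕ) ≤ s i ∧ s i ≤ cum t ((k : ℕ) + 1))).card : ℝ) := by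
      exact_mod_cast Finset.card_le_card hsub
    have hsucc := cum_succ_fin (t := t) k
    nlinarith [h', hcard]
  set G : Finset (Fin L) := Finset.univ.biUnion good with hG
  have hcardG : G.card = ∑ k, (good k).card := Finset.card_biUnion hdisj
  have hGsub : G ⊆ Finset.univ := Finset.subset_univ G
  set R : ℝ := ∑ i ∈ Finset.univ \ G, f (Γ (betaFn t w (s i))) with hR
  have hsplit : ∑ i : Fin L, f (Γ (betaFn t w (s i)))
      = (∑ k, ((good k).card : ℝ) * f (p k)) + R := by
    rw [hR, ← Finset.sum_sdiff hGsub, hG, Finset.sum_biUnion hdisj]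
    have : ∀ k ∈ Finset.univ, ∑ i ∈ good k, f (Γ (betaFn t w (s i)))
        = ((good k).card : ℝ) * f (p k) := by
      intro k _
      rw [Finset.sum_congr rfl (hval k), Finset.sum_const, nsmul_eq_mul]
    rw [Finset.sum_congr rfl this]
    ring
  set c : Fin m → ℝ := fun k => ((good k).card : ℝ) / L with hc
  have hckL : ∀ k, c k * L = ((good k).card : ℝ) := by
    intro k; rw [hc]; field_simp
  have hcdiff : ∀ k, |t k - c k| ≤ w + 1 / L := by
    intro k
    rw [abs_le]
    have h1 := hup k
    have h2 := hlow k
    have h3 := hckL k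
    have hinv : (1 / (L:ℝ)) * L = 1 := by field_simp
    constructor
    · nlinarith
    · nlinarith
  -- main identity
  have e1 : ∀ k ∈ (Finset.univ : Finset (Fin m)),
      (1 / (L:ℝ)) * (((good k).card : ℝ) * f (p k)) = c k * f (p k) := by
    intro k _; rw [hc]; ring
  have hmain : ∑ k, t k * f (p k) -
      (1 / L : ℝ) * ∑ i : Fin L, f (Γ (betaFn t w (s i)))
      = (∑ k, (t k - c k) * f (p k)) - (1 / L) * R := by
    rw [hsplit, mul_add, Finset.mul_sum, Finset.sum_congr rfl e1]
    have hdist : ∑ k, (t k - c k) * f (p k)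
        = (∑ k, t k * f (p k)) - ∑ k, c k * f (p k) := by
      rw [← Finset.sum_sub_distrib]
      exact Finset.sum_congr rfl fun k _ => by ring
    rw [hdist]
    ring
  have hterm1 : |∑ k, (t k - c k) * f (p k)| ≤ (m:ℝ) * (w + 1 / L) * B := by
    calc |∑ k, (t k - c k) * f (p k)| ≤ ∑ k, |(t k - c k) * f (p k)| :=
          Finset.abs_sum_le_sum_abs _ _
    _ ≤ ∑ k : Fin m, (w + 1 / L) * B := by
        refine Finset.sum_le_sum fun k _ => ?_
        rw [abs_mul]
        exact mul_le_mul (hcdiff k) (hB _) (abs_nonneg _) (by positivity)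
    _ = (m:ℝ) * (w + 1 / L) * B := by
        rw [Finset.sum_const, nsmul_eq_mul, Finset.card_univ, Fintype.card_fin]
        ring
  have hGleL : G.card ≤ L := by
    calc G.card ≤ (Finset.univ : Finset (Fin L)).card := Finset.card_le_card hGsub
    _ = L := by rw [Finset.card_univ, Fintype.card_fin]
  have hcard_sdiff : (((Finset.univ : Finset (Fin L)) \ G).card : ℝ) = (L:ℝ) - G.card := by
    rw [Finset.card_sdiff_of_subset hGsub, Finset.card_univ, Fintype.card_fin, Nat.cast_sub hGleL]
  have hRabs : |R| ≤ ((L:ℝ) - G.card) * B := by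
    calc |R| ≤ ∑ i ∈ Finset.univ \ G, |f (Γ (betaFn t w (s i)))| :=
          Finset.abs_sum_le_sum_abs _ _
    _ ≤ ∑ i ∈ Finset.univ \ G, B := Finset.sum_le_sum fun i _ => hB _
    _ = (((Finset.univ : Finset (Fin L)) \ G).card : ℝ) * B := by
        rw [Finset.sum_const, nsmul_eq_mul]
    _ = ((L:ℝ) - G.card) * B := by rw [hcard_sdiff]
  have hGc : (G.card : ℝ) = (∑ k, c k) * L := by
    rw [hcardG]
    push_cast
    rw [Finset.sum_mul]
    exact Finset.sum_congr rfl fun k _ => (hckL k).symm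
  have hsum_tc : ∑ k, (t k - c k) ≤ (m:ℝ) * (w + 1 / L) := by
    calc ∑ k, (t k - c k) ≤ ∑ k, |t k - c k| :=
          Finset.sum_le_sum fun k _ => le_abs_self _
    _ ≤ ∑ k : Fin m, (w + 1 / L) := Finset.sum_le_sum fun k _ => hcdiff k
    _ = (m:ℝ) * (w + 1 / L) := by
        rw [Finset.sum_const, nsmul_eq_mul, Finset.card_univ, Fintype.card_fin]
  have hterm2 : (1 / (L:ℝ)) * |R| ≤ (m:ℝ) * (w + 1 / L) * B := by
    have h1 : (1 / (L:ℝ)) * |R| ≤ (1 / L) * (((L:ℝ) - G.card) * B) := by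
      apply mul_le_mul_of_nonneg_left hRabs (by positivity)
    have h2 : (1 / (L:ℝ)) * (((L:ℝ) - G.card) * B) = (1 - ∑ k, c k) * B := by
      rw [hGc]; field_simp
    have h3 : 1 - ∑ k, c k = ∑ k, (t k - c k) := by
      rw [Finset.sum_sub_distrib, ht1]
    have h4 : (1 - ∑ k, c k) * B ≤ (m:ℝ) * (w + 1 / L) * B := by
      rw [h3]
      exact mul_le_mul_of_nonneg_right hsum_tc hB0
    linarith
  calc |∑ k, t k * f (p k) -
        (1 / L : ℝ) * ∑ i : Fin L, f (Γ (betaFn t w ((((i : ℕ) : ℝ) + 1) / L)))|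
      = |(∑ k, (t k - c k) * f (p k)) - (1 / L) * R| := by rw [← hmain]
  _ ≤ |∑ k, (t k - c k) * f (p k)| + |(1 / L) * R| := abs_sub _ _
  _ = |∑ k, (t k - c k) * f (p k)| + (1 / L) * |R| := by
      rw [abs_mul, abs_of_nonneg (le_of_lt (by positivity : (0:ℝ) < 1 / L))]
  _ ≤ (m:ℝ) * (w + 1 / L) * B + (m:ℝ) * (w + 1 / L) * B := add_le_add hterm1 hterm2
  _ = 2 * B * m * (w + 1 / L) := by ring

lemma clamp01_continuous : Continuous clamp01 :=
  continuous_const.max (continuous_const.min continuous_id)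

lemma chain_exists {X : Type*} [TopologicalSpace X] [PathConnectedSpace X] (p : ℕ → X) (m : ℕ) :
    ∃ Γ : C(ℝ, X), ∀ k, k ≤ m → Γ (k : ℝ) = p k := by
  induction m with
  | zero =>
    refine ⟨ContinuousMap.const ℝ (p 0), ?_⟩
    intro k hk
    have : k = 0 := Nat.le_zero.mp hk
    subst this; simp
  | succ n ih =>
    obtain ⟨Γ, hΓ⟩ := ih
    set γ := PathConnectedSpace.somePath (p n) (p (n + 1)) with hγ
    refine ⟨⟨fun r => if r ≤ (n : ℝ) then Γ r else γ.extend (r - n), ?_⟩, ?_⟩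
    · refine Continuous.if_le Γ.continuous
        (γ.continuous_extend.comp (continuous_id.sub continuous_const))
        continuous_id continuous_const ?_
      intro r hr
      rw [hr]
      simp [hΓ n le_rfl]
    · intro k hk
      rcases Nat.lt_or_ge k (n + 1) with h | h
      · have hkn : k ≤ n := Nat.lt_succ_iff.mp h
        have : (k : ℝ) ≤ (n : ℝ) := by exact_mod_cast hkn
        simp only [ContinuousMap.coe_mk]
        rw [if_pos this]
        exact hΓ k hkn
      · have hk' : k = n + 1 := le_antisymm hk h
        subst hk'
        simp only [ContinuousMap.coe_mk]
        rw [if_neg (by push_cast; linarith)]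
        rw [show ((n + 1 : ℕ) : ℝ) - (n : ℝ) = 1 by push_cast; ring, Path.extend_one]

lemma betaFn_cont {m : ℕ} {α : Type*} [TopologicalSpace α] (t : Fin m → α → ℝ)
    (ht : ∀ k, Continuous (t k)) (w s : ℝ) :
    Continuous (fun v => betaFn (fun k => t k v) w s) := by
  unfold betaFn cum
  apply continuous_finset_sum
  intro k _
  refine clamp01_continuous.comp ?_
  refine Continuous.add (Continuous.div_const
    (continuous_const.sub (continuous_finset_sum _ fun j _ => ?_)) w) continuous_const
  by_cases h : j < m
  · simpa [h] using ht ⟨j, h⟩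
  · simpa [h] using continuous_const

/-- Theorem 1.2 of the paper (due to Li): unital positive linear maps
`C(X,ℝ) → C(Y,ℝ)` with `X` path connected compact metric can be approximated,
on a given finite set and up to `ε`, by an average of `N` maps induced by
continuous maps `Y → X` each homotopic to a constant map, with `N` depending only
on the finite set and `ε`. -/
theorem stmt_2 {X : Type*} [MetricSpace X] [CompactSpace X] [PathConnectedSpace X]
    (F : Finset C(X, ℝ)) (ε : ℝ) (hε : 0 < ε) :
    ∃ N : ℕ, 0 < N ∧
      ∀ (Y : Type) [MetricSpace Y] [CompactSpace Y],
        ∀ ξ : C(X, ℝ) →ₗ[ℝ] C(Y, ℝ),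
          ξ 1 = 1 →
          (∀ f : C(X, ℝ), (∀ x, 0 ≤ f x) → ∀ y, 0 ≤ ξ f y) →
          ∃ g : Fin N → C(Y, X),
            (∀ i, ∃ x₀ : X, (g i).Homotopic (ContinuousMap.const Y x₀)) ∧
            ∀ f ∈ F, ∀ y : Y, |ξ f y - (1 / N : ℝ) * ∑ i, f (g i y)| < ε := by
  classical
  have hXne : Nonempty X := PathConnectedSpace.nonempty
  obtain ⟨x₀⟩ := hXne
  set ι := {f : C(X, ℝ) // f ∈ F} with hι
  set e : X → (ι → ℝ) := fun x i => (i : C(X, ℝ)) x with he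
  have he_cont : Continuous e := continuous_pi fun i => (i : C(X, ℝ)).continuous
  set B : ℝ := 1 + ∑ f ∈ F, ‖f‖ with hBdef
  have hB1 : (1 : ℝ) ≤ B := by
    have := Finset.sum_nonneg (fun f (_ : f ∈ F) => norm_nonneg f)
    rw [hBdef]; linarith
  have hB0 : (0 : ℝ) < B := lt_of_lt_of_le one_pos hB1
  have hBf : ∀ i : ι, ∀ x : X, |(i : C(X, ℝ)) x| ≤ B := by
    intro i x
    have h1 : |(i : C(X, ℝ)) x| ≤ ‖(i : C(X, ℝ))‖ := by
      rw [← Real.norm_eq_abs]; exact (i : C(X, ℝ)).norm_coe_le_norm x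
    have h2 : ‖(i : C(X, ℝ))‖ ≤ ∑ f ∈ F, ‖f‖ :=
      Finset.single_le_sum (fun g _ => norm_nonneg g) i.2
    rw [hBdef]; linarith
  set hull : Set (ι → ℝ) := convexHull ℝ (Set.range e) with hhull
  set K : Set (ι → ℝ) := closure hull with hKdef
  have hKconv : Convex ℝ K := (convex_convexHull ℝ _).closure
  have hKcl : IsClosed K := isClosed_closure
  have hKcomp : IsCompact K := by
    have hbd : Bornology.IsBounded hull := by
      rw [hhull, isBounded_convexHull]
      exact (isCompact_range he_cont).isBounded
    exact Metric.isCompact_of_isClosed_isBounded hKcl hbd.closure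
  have hKne : K.Nonempty := ⟨e x₀, subset_closure (subset_convexHull ℝ _ ⟨x₀, rfl⟩)⟩
  have hη : (0 : ℝ) < ε / 6 := by linarith
  obtain ⟨netS, hnetK, hnetFin, hnetCover⟩ := hKcomp.finite_cover_balls hη
  set netF : Finset (ι → ℝ) := hnetFin.toFinset with hnetF
  have hnetF_mem : ∀ u : ι → ℝ, u ∈ netF ↔ u ∈ netS := fun u => hnetFin.mem_toFinset
  have hnear : ∀ u : {u // u ∈ netF}, ∃ v, v ∈ hull ∧ dist (u : ι → ℝ) v < ε / 6 := by
    intro u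
    have huK : (u : ι → ℝ) ∈ K := hnetK ((hnetF_mem u).mp u.2)
    rcases Metric.mem_closure_iff.mp huK (ε / 6) hη with ⟨v, hv, hd⟩
    exact ⟨v, hv, hd⟩
  choose nv hnvhull hnvdist using hnear
  have hrep : ∀ u : {u // u ∈ netF}, ∃ (n : ℕ) (wgt : Fin n → ℝ) (z : Fin n → X),
      (∀ j, 0 ≤ wgt j) ∧ (∑ j, wgt j = 1) ∧ (∑ j, wgt j • e (z j)) = nv u := by
    intro u
    have := hnvhull u
    rw [hhull, mem_convexHull_iff_exists_fintype] at this
    obtain ⟨κ, hκ, wgt, z, h0, h1, hz, hsum⟩ := this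
    choose xz hxz using hz
    set eqv := Fintype.equivFin κ
    refine ⟨Fintype.card κ, wgt ∘ eqv.symm, xz ∘ eqv.symm, fun j => h0 _, ?_, ?_⟩
    · exact (Equiv.sum_comp eqv.symm wgt).trans h1
    · calc ∑ j, (wgt ∘ eqv.symm) j • e ((xz ∘ eqv.symm) j)
          = ∑ j : κ, wgt j • e (xz j) := Equiv.sum_comp eqv.symm (fun j => wgt j • e (xz j))
      _ = ∑ j : κ, wgt j • z j := Finset.sum_congr rfl fun j _ => by rw [hxz j]
      _ = nv u := hsum
  choose nn wgt zz hwgt0 hwgt1 hwgtsum using hrep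
  set A := Σ u : {u // u ∈ netF}, Fin (nn u) with hA
  have hnetF_ne : netF.Nonempty := by
    obtain ⟨v0, hv0⟩ := hKne
    obtain ⟨u, hu, _⟩ := Set.mem_iUnion₂.mp (hnetCover hv0)
    exact ⟨u, (hnetF_mem u).mpr hu⟩
  have hnn_pos : ∀ u, 0 < nn u := by
    intro u
    by_contra h
    push_neg at h
    have h0 : nn u = 0 := by omega
    have := hwgt1 u
    rw [Finset.sum_eq_zero (fun j _ => ?_)] at this
    · norm_num at this
    · exact absurd j.isLt (by omega)
  have hAne : Nonempty A := ⟨⟨⟨hnetF_ne.choose, hnetF_ne.choose_spec⟩, ⟨0, hnn_pos _⟩⟩⟩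
  set m := Fintype.card A with hm
  have hmpos : 0 < m := Fintype.card_pos_iff.mpr hAne
  set eqA := Fintype.equivFin A with heqA
  set pA : A → X := fun a => zz a.1 a.2 with hpA
  set p' : Fin m → X := fun k => pA (eqA.symm k) with hp'
  -- partition of unity
  set ρ : {u // u ∈ netF} → (ι → ℝ) → ℝ := fun u v => max 0 (ε / 3 - dist v (nv u)) with hρ
  have hρcont : ∀ u, Continuous (ρ u) :=
    fun u => continuous_const.max (continuous_const.sub (continuous_id.dist continuous_const))
  have hρ0 : ∀ u v, 0 ≤ ρ u v := fun u v => le_max_left _ _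
  set Df : (ι → ℝ) → ℝ := fun v => ∑ u, ρ u v with hDf
  have hDcont : Continuous Df := continuous_finset_sum _ fun u _ => hρcont u
  have hDpos : ∀ v ∈ K, 0 < Df v := by
    intro v hv
    obtain ⟨u, hu, hball⟩ := Set.mem_iUnion₂.mp (hnetCover hv)
    have hdu : dist v u < ε / 6 := Metric.mem_ball.mp hball
    set u' : {u // u ∈ netF} := ⟨u, (hnetF_mem u).mpr hu⟩
    have hd3 : dist v (nv u') < ε / 3 := by
      have htri : dist v (nv u') ≤ dist v u + dist u (nv u') := dist_triangle _ _ _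
      have := hnvdist u'
      simp only [u'] at this ⊢
      linarith
    refine Finset.sum_pos' (fun u _ => hρ0 u v) ⟨u', Finset.mem_univ _, ?_⟩
    exact lt_max_of_lt_right (by linarith)
  obtain ⟨vmin, hvminK, hvmin⟩ := hKcomp.exists_isMinOn hKne hDcont.continuousOn
  set μ := Df vmin with hμdef
  have hμ : 0 < μ := hDpos vmin hvminK
  set Den : (ι → ℝ) → ℝ := fun v => max (Df v) μ with hDen
  have hDenpos : ∀ v, 0 < Den v := fun v => lt_max_of_lt_right hμ
  have hDencont : Continuous Den := hDcont.max continuous_const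
  have hDenK : ∀ v ∈ K, Den v = Df v := fun v hv => max_eq_left (isMinOn_iff.mp hvmin v hv)
  set tw : {u // u ∈ netF} → (ι → ℝ) → ℝ := fun u v => ρ u v / Den v with htw
  have htwcont : ∀ u, Continuous (tw u) :=
    fun u => (hρcont u).div hDencont (fun v => (hDenpos v).ne')
  have htw0 : ∀ u v, 0 ≤ tw u v := fun u v => div_nonneg (hρ0 u v) (hDenpos v).le
  have htwsum : ∀ v ∈ K, ∑ u, tw u v = 1 := by
    intro v hv
    show ∑ u, ρ u v / Den v = 1
    rw [← Finset.sum_div]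
    show Df v / Den v = 1
    rw [hDenK v hv]
    exact div_self (hDpos v hv).ne'
  have hstage1 : ∀ v ∈ K, ∀ i : ι, |v i - ∑ u, tw u v * nv u i| ≤ ε / 3 := by
    intro v hv i
    have hsum1 := htwsum v hv
    have hid : v i - ∑ u, tw u v * nv u i = ∑ u, tw u v * (v i - nv u i) := by
      have : ∑ u, tw u v * (v i - nv u i)
          = (∑ u, tw u v * v i) - ∑ u, tw u v * nv u i := by
        rw [← Finset.sum_sub_distrib]
        exact Finset.sum_congr rfl fun u _ => by ring
      rw [this, ← Finset.sum_mul, hsum1, one_mul]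
    rw [hid]
    calc |∑ u, tw u v * (v i - nv u i)| ≤ ∑ u, |tw u v * (v i - nv u i)| :=
          Finset.abs_sum_le_sum_abs _ _
    _ ≤ ∑ u, tw u v * (ε / 3) := by
        refine Finset.sum_le_sum fun u _ => ?_
        rw [abs_mul, abs_of_nonneg (htw0 u v)]
        by_cases hzero : ρ u v = 0
        · simp [htw, hzero]
        · have hρpos : 0 < ρ u v := lt_of_le_of_ne (hρ0 u v) (Ne.symm hzero)
          have hd : dist v (nv u) < ε / 3 := by
            by_contra hge
            push_neg at hge
            have : ρ u v = 0 := max_eq_left (by linarith)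
            exact hzero this
          have habs : |v i - nv u i| ≤ dist v (nv u) := by
            rw [← Real.dist_eq]
            exact dist_le_pi_dist v (nv u) i
          exact mul_le_mul_of_nonneg_left (by linarith) (htw0 u v)
    _ = (∑ u, tw u v) * (ε / 3) := (Finset.sum_mul _ _ _).symm
    _ = ε / 3 := by rw [hsum1, one_mul]
  -- flattened weights
  set lam : A → (ι → ℝ) → ℝ := fun a v => tw a.1 v * wgt a.1 a.2 with hlam
  have hlam0 : ∀ a v, 0 ≤ lam a v := fun a v => mul_nonneg (htw0 _ _) (hwgt0 _ _)
  have hlamcont : ∀ a, Continuous (lam a) := fun a => (htwcont a.1).mul continuous_const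
  have hlamsum : ∀ v ∈ K, ∑ a : A, lam a v = 1 := by
    intro v hv
    rw [← Finset.univ_sigma_univ, Finset.sum_sigma]
    calc ∑ u, ∑ j, tw u v * wgt u j = ∑ u, tw u v := by
          refine Finset.sum_congr rfl fun u _ => ?_
          rw [← Finset.mul_sum, hwgt1, mul_one]
    _ = 1 := htwsum v hv
  have hlamapprox : ∀ v ∈ K, ∀ i : ι, |v i - ∑ a : A, lam a v * e (pA a) i| ≤ ε / 3 := by
    intro v hv i
    have hkey : ∑ a : A, lam a v * e (pA a) i = ∑ u, tw u v * nv u i := by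
      rw [← Finset.univ_sigma_univ, Finset.sum_sigma]
      refine Finset.sum_congr rfl fun u _ => ?_
      have hinner : ∑ j, wgt u j * e (zz u j) i = nv u i := by
        have := congrFun (hwgtsum u) i
        simpa [Finset.sum_apply, Pi.smul_apply, smul_eq_mul] using this
      rw [← hinner, Finset.mul_sum]
      exact Finset.sum_congr rfl fun j _ => by ring
    rw [hkey]
    exact hstage1 v hv i
  -- numerical choices
  have hm' : (0 : ℝ) < (m : ℝ) := by exact_mod_cast hmpos
  set w : ℝ := ε / (12 * B * (m : ℝ)) with hwdef
  have hw : 0 < w := by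
    rw [hwdef]
    exact div_pos hε (by positivity)
  set L : ℕ := ⌈12 * B * (m : ℝ) / ε⌉₊ with hLdef
  have hLpos : 0 < L := Nat.ceil_pos.mpr (by positivity)
  have hL' : (0 : ℝ) < (L : ℝ) := by exact_mod_cast hLpos
  have h1L : 1 / (L : ℝ) ≤ w := by
    rw [div_le_iff₀ hL']
    have hceil : 12 * B * (m : ℝ) / ε ≤ (L : ℝ) := Nat.le_ceil _
    calc (1 : ℝ) = (ε / (12 * B * (m : ℝ))) * (12 * B * (m : ℝ) / ε) := by field_simp
    _ ≤ (ε / (12 * B * (m : ℝ))) * L := mul_le_mul_of_nonneg_left hceil (by positivity)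
    _ = w * L := by rw [hwdef]
  have hnum : 2 * B * (m : ℝ) * (w + 1 / L) ≤ ε / 3 := by
    have : 2 * B * (m : ℝ) * (w + 1 / L) ≤ 2 * B * (m : ℝ) * (w + w) := by
      apply mul_le_mul_of_nonneg_left (by linarith) (by positivity)
    calc 2 * B * (m : ℝ) * (w + 1 / L) ≤ 2 * B * (m : ℝ) * (w + w) := this
    _ = 4 * B * (m : ℝ) * w := by ring
    _ = ε / 3 := by
        rw [hwdef]
        field_simp
        ring
  -- the path
  set p'' : ℕ → X := fun k => if h : k < m then p' ⟨k, h⟩ else x₀ with hp''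
  obtain ⟨Γ, hΓn⟩ := chain_exists p'' (m - 1)
  have hΓ : ∀ k : Fin m, Γ (((k : ℕ) : ℝ)) = p' k := by
    intro k
    have := hΓn (k : ℕ) (by omega)
    simpa [hp'', k.isLt] using this
  refine ⟨L, hLpos, ?_⟩
  intro Y _ _ ξ hξ1 hξpos
  set Θ : Y → (ι → ℝ) := fun y i => ξ (i : C(X, ℝ)) y with hΘ
  have hΘcont : Continuous Θ := continuous_pi fun i => (ξ (i : C(X, ℝ))).continuous
  have hΘK : ∀ y, Θ y ∈ K := by
    intro y
    by_contra hy
    obtain ⟨c, u, hcu, huc⟩ := geometric_hahn_banach_closed_point hKconv hKcl hy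
    set cc : ι → ℝ := fun i => c (fun j => if i = j then (1 : ℝ) else 0) with hcc
    set h : C(X, ℝ) := ∑ i : ι, cc i • (i : C(X, ℝ)) with hh
    have hhx : ∀ x, h x = c (e x) := by
      intro x
      conv_rhs => rw [pi_eq_sum_univ (e x)]
      rw [map_sum, hh]
      simp only [ContinuousMap.coe_sum, Finset.sum_apply, ContinuousMap.coe_smul, Pi.smul_apply,
        smul_eq_mul, map_smul]
      exact Finset.sum_congr rfl fun i _ => by rw [hcc, he]; ring
    have hlt : ∀ x, h x < u := fun x =>
      (hhx x) ▸ hcu _ (subset_closure (subset_convexHull ℝ _ ⟨x, rfl⟩))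
    have hle : ξ h y ≤ u := by
      have hpos := hξpos ((u • (1 : C(X, ℝ))) - h) (fun x => by
        simp only [ContinuousMap.sub_apply, ContinuousMap.smul_apply, ContinuousMap.one_apply,
          smul_eq_mul, mul_one]
        linarith [hlt x]) y
      rw [map_sub, map_smul, hξ1] at hpos
      simp only [ContinuousMap.sub_apply, ContinuousMap.smul_apply, ContinuousMap.one_apply,
        smul_eq_mul, mul_one] at hpos
      linarith
    have h2 : ξ h y = ∑ i : ι, cc i * ξ (i : C(X, ℝ)) y := by
      rw [hh, map_sum]
      simp only [ContinuousMap.coe_sum, Finset.sum_apply]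
      exact Finset.sum_congr rfl fun i _ => by rw [map_smul]; rfl
    have h3 : c (Θ y) = ∑ i : ι, Θ y i * cc i := by
      conv_lhs => rw [pi_eq_sum_univ (Θ y)]
      rw [map_sum]
      exact Finset.sum_congr rfl fun i _ => by rw [map_smul, hcc]; rfl
    have h4 : ξ h y = c (Θ y) := by
      rw [h2, h3]
      exact Finset.sum_congr rfl fun i _ => by rw [hΘ]; ring
    rw [h4] at hle
    linarith
  set Gf : Fin L → (ι → ℝ) → X := fun i v =>
    Γ (betaFn (fun k : Fin m => lam (eqA.symm k) v) w ((((i : ℕ) : ℝ) + 1) / L)) with hGf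
  have hGcont : ∀ i, Continuous (Gf i) :=
    fun i => Γ.continuous.comp (betaFn_cont _ (fun k => hlamcont _) w _)
  refine ⟨fun i => ⟨fun y => Gf i (Θ y), (hGcont i).comp hΘcont⟩, ?_, ?_⟩
  · -- homotopic to constant maps
    intro i
    refine ⟨Gf i 0, ⟨⟨⟨fun q => Gf i ((1 - (q.1 : ℝ)) • Θ q.2), ?_⟩, ?_, ?_⟩⟩⟩
    · exact (hGcont i).comp ((continuous_const.sub
        (continuous_subtype_val.comp continuous_fst)).smul (hΘcont.comp continuous_snd))
    · intro yy
      simp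
    · intro yy
      simp
  · -- the estimate
    intro f hf y
    set i₀ : ι := ⟨f, hf⟩ with hi₀
    have hΘy := hΘK y
    have happrox := hlamapprox (Θ y) hΘy i₀
    have hsumlam : ∑ k : Fin m, lam (eqA.symm k) (Θ y) = 1 := by
      rw [Equiv.sum_comp eqA.symm (fun a => lam a (Θ y))]
      exact hlamsum (Θ y) hΘy
    have hdisc := discretize hmpos hLpos p' Γ hΓ hw (fun k => lam (eqA.symm k) (Θ y))
      (fun k => hlam0 _ _) hsumlam (fun x => f x) B (fun x => hBf i₀ x)
    have hsum_eq : ∑ k : Fin m, lam (eqA.symm k) (Θ y) * f (p' k)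
        = ∑ a : A, lam a (Θ y) * e (pA a) i₀ :=
      Equiv.sum_comp eqA.symm (fun a => lam a (Θ y) * e (pA a) i₀)
    have hfirst : |Θ y i₀ - ∑ k : Fin m, lam (eqA.symm k) (Θ y) * f (p' k)| ≤ ε / 3 := by
      rw [hsum_eq]
      exact happrox
    have hξfy : ξ f y = Θ y i₀ := rfl
    have hsecond : |∑ k : Fin m, lam (eqA.symm k) (Θ y) * f (p' k) -
        (1 / L : ℝ) * ∑ i : Fin L, f (Gf i (Θ y))| ≤ ε / 3 := le_trans hdisc hnum
    calc |ξ f y - (1 / (L : ℕ) : ℝ) * ∑ i : Fin L, f (Gf i (Θ y))|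
        ≤ |ξ f y - ∑ k : Fin m, lam (eqA.symm k) (Θ y) * f (p' k)| +
          |∑ k : Fin m, lam (eqA.symm k) (Θ y) * f (p' k) -
            (1 / L : ℝ) * ∑ i : Fin L, f (Gf i (Θ y))| := abs_sub_le _ _ _
    _ ≤ ε / 3 + ε / 3 := add_le_add (hξfy ▸ hfirst) hsecond
    _ < ε := by linarith
end LiProof
end

section
/- Let Y be a nonempty compact metrizable space. Then there exist a sequence of positive integers (k_l)_{l∈ℕ}, for each l points y_{l,1}, …, y_{l,k_l} ∈ Y, unital *-homomorphisms β_l : ℂ^{k_l} → ℂ^{k_{l+1}}, and unital positive linear maps φ_l : ℂ^{k_l} → C(Y, ℂ), such that, writing ψ_l : C(Y, ℂ) → ℂ^{k_l} for the unital *-homomorphism ψ_l(f) = (f(y_{l,1}), …, f(y_{l,k_l})), one has for every f ∈ C(Y, ℂ): ‖β_l(ψ_l(f)) − ψ_{l+1}(f)‖ → 0 as l → ∞, and ‖φ_l(ψ_l(f)) − f‖ → 0 as l → ∞. (This is the content of Proposition 2.3 of the paper: the ψ_l asymptotically intertwine the connecting maps of a commutative AF algebra, and the φ_l asymptotically invert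 the ψ_l.) -/
open scoped ComplexOrder


section aux
variable {Y : Type} [MetricSpace Y] [CompactSpace Y] [Nonempty Y]

lemma exists_net (ε : ℝ) (hε : 0 < ε) :
    ∃ (k : ℕ) (y : Fin k → Y), 0 < k ∧ ∀ p : Y, ∃ i, dist p (y i) < ε := by
  obtain ⟨t, ht⟩ := isCompact_univ.elim_finite_subcover (fun p : Y => Metric.ball p ε)
    (fun p => Metric.isOpen_ball) (fun p _ => Set.mem_iUnion.2 ⟨p, Metric.mem_ball_self hε⟩)
  have htne : t.Nonempty := by
    rcases ‹Nonempty Y› with ⟨p⟩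
    rcases Set.mem_iUnion₂.1 (ht (Set.mem_univ p)) with ⟨q, hq, _⟩
    exact ⟨q, hq⟩
  refine ⟨t.card, fun i => (t.equivFin.symm i : Y), Finset.card_pos.2 htne, fun p => ?_⟩
  rcases Set.mem_iUnion₂.1 (ht (Set.mem_univ p)) with ⟨q, hq, hpq⟩
  exact ⟨t.equivFin ⟨q, hq⟩, by simpa [Metric.mem_ball] using hpq⟩

lemma exists_phi (k : ℕ) (y : Fin k → Y) (ε : ℝ)
    (hnet : ∀ p : Y, ∃ i, dist p (y i) < ε) :
    ∃ φ : (Fin k → ℂ) →ₗ[ℂ] C(Y, ℂ),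
      φ 1 = 1 ∧
      (∀ v, (∀ i, 0 ≤ v i) → ∀ p, 0 ≤ φ v p) ∧
      (∀ (f : C(Y, ℂ)) (δ : ℝ), 0 ≤ δ →
        (∀ p q : Y, dist p q < ε → ‖f q - f p‖ ≤ δ) →
        ‖φ (fun i => f (y i)) - f‖ ≤ δ) := by
  classical
  set h : Fin k → Y → ℝ := fun i p => max (ε - dist p (y i)) 0 with hh
  have hcont : ∀ i, Continuous (h i) := fun i =>
    ((continuous_const.sub (continuous_id.dist continuous_const)).max continuous_const)
  have hnonneg : ∀ i p, 0 ≤ h i p := fun i p => le_max_right _ _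
  set S : Y → ℝ := fun p => ∑ i, h i p with hS
  have hScont : Continuous S := continuous_finset_sum _ fun i _ => hcont i
  have hSpos : ∀ p, 0 < S p := by
    intro p
    obtain ⟨i, hi⟩ := hnet p
    exact Finset.sum_pos' (fun j _ => hnonneg j p)
      ⟨i, Finset.mem_univ i, lt_max_of_lt_left (by linarith)⟩
  set χ : Fin k → Y → ℝ := fun i p => h i p / S p with hχ
  have hχcont : ∀ i, Continuous (χ i) := fun i => (hcont i).div hScont fun p => (hSpos p).ne'
  have hχnonneg : ∀ i p, 0 ≤ χ i p := fun i p => div_nonneg (hnonneg i p) (hSpos p).le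
  have hχsum : ∀ p, ∑ i, χ i p = 1 := fun p => by
    rw [hχ]; rw [← Finset.sum_div]; exact div_self (hSpos p).ne'
  refine ⟨{ toFun := fun v => ⟨fun p => ∑ i, v i * (χ i p : ℂ), ?_⟩
            map_add' := ?_, map_smul' := ?_ }, ?_, ?_, ?_⟩
  · exact continuous_finset_sum _ fun i _ =>
      continuous_const.mul (Complex.continuous_ofReal.comp (hχcont i))
  · intro v w; ext p; simp [add_mul, Finset.sum_add_distrib]
  · intro c v; ext p
    simp only [ContinuousMap.coe_mk, RingHom.id_apply, ContinuousMap.smul_apply, Pi.smul_apply,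
      smul_eq_mul, Finset.mul_sum, mul_assoc]
  · ext p
    simp only [LinearMap.coe_mk, AddHom.coe_mk, ContinuousMap.coe_mk, Pi.one_apply, one_mul,
      ContinuousMap.one_apply]
    rw [← Complex.ofReal_sum, hχsum p, Complex.ofReal_one]
  · intro v hv p
    exact Finset.sum_nonneg fun i _ => mul_nonneg (hv i)
      (by exact_mod_cast Complex.zero_le_real.2 (hχnonneg i p))
  · intro f δ hδ hf
    refine ContinuousMap.norm_le _ hδ |>.2 fun p => ?_
    have key : (∑ i, f (y i) * (χ i p : ℂ)) - f p
        = ∑ i, (f (y i) - f p) * (χ i p : ℂ) := by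
      have : f p = ∑ i, f p * (χ i p : ℂ) := by
        rw [← Finset.mul_sum, ← Complex.ofReal_sum, hχsum p, Complex.ofReal_one, mul_one]
      rw [Finset.sum_congr rfl fun i _ => sub_mul (f (y i)) (f p) (χ i p : ℂ),
        Finset.sum_sub_distrib, ← this]
    simp only [ContinuousMap.sub_apply, ContinuousMap.coe_mk, LinearMap.coe_mk, AddHom.coe_mk]
    rw [key]
    calc ‖∑ i, (f (y i) - f p) * (χ i p : ℂ)‖
        ≤ ∑ i, ‖(f (y i) - f p) * (χ i p : ℂ)‖ := norm_sum_le _ _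
      _ ≤ ∑ i, δ * χ i p := by
          refine Finset.sum_le_sum fun i _ => ?_
          rw [norm_mul, Complex.norm_real, Real.norm_of_nonneg (hχnonneg i p)]
          rcases eq_or_lt_of_le (hχnonneg i p) with h0 | h0
          · rw [← h0, mul_zero, mul_zero]
          · refine mul_le_mul_of_nonneg_right ?_ (hχnonneg i p)
            have : dist p (y i) < ε := by
              by_contra hcon
              have : h i p = 0 := max_eq_right (by push_neg at hcon; linarith)
              simp [hχ, this] at h0
            exact hf p (y i) this
      _ = δ := by rw [← Finset.mul_sum, hχsum p, mul_one]

/-- Composition star algebra hom between finite-dimensional commutative C*-algebras. -/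
def compSAH {k m : ℕ} (g : Fin m → Fin k) : (Fin k → ℂ) →⋆ₐ[ℂ] (Fin m → ℂ) where
  toFun v := v ∘ g
  map_one' := rfl
  map_mul' _ _ := rfl
  map_zero' := rfl
  map_add' _ _ := rfl
  commutes' _ := rfl
  map_star' _ := rfl

lemma eps_pos (l : ℕ) : (0:ℝ) < 1 / (l + 1) := by positivity

lemma eventually_eps_lt {ε : ℝ} (hε : 0 < ε) : ∀ᶠ l : ℕ in Filter.atTop, 1 / ((l:ℝ) + 1) < ε := by
  have := tendsto_one_div_add_atTop_nhds_zero_nat (𝕜 := ℝ)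
  exact this.eventually (gt_mem_nhds hε)

end aux


/-- The content of Proposition 2.3 of the paper: for a compact metrizable space `Y`
there are point-evaluation maps `ψ_l : C(Y) → ℂ^{k_l}`, connecting unital
*-homomorphisms `β_l : ℂ^{k_l} → ℂ^{k_{l+1}}` (of a commutative AF algebra) which the
`ψ_l` asymptotically intertwine, and unital positive linear maps
`φ_l : ℂ^{k_l} → C(Y)` asymptotically inverting the `ψ_l`. -/
theorem stmt_3 (Y : Type) [TopologicalSpace Y] [CompactSpace Y]
    [TopologicalSpace.MetrizableSpace Y] [Nonempty Y] :
    ∃ k : ℕ → ℕ, (∀ l, 0 < k l) ∧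
      ∃ (y : (l : ℕ) → Fin (k l) → Y)
        (β : (l : ℕ) → ((Fin (k l) → ℂ) →⋆ₐ[ℂ] (Fin (k (l + 1)) → ℂ)))
        (φ : (l : ℕ) → ((Fin (k l) → ℂ) →ₗ[ℂ] C(Y, ℂ))),
        (∀ l, φ l 1 = 1) ∧
        (∀ l (v : Fin (k l) → ℂ), (∀ i, 0 ≤ v i) → ∀ p : Y, 0 ≤ φ l v p) ∧
        (∀ f : C(Y, ℂ),
          Filter.Tendsto
            (fun l => ‖β l (fun i => f (y l i)) - (fun i => f (y (l + 1) i))‖)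
            Filter.atTop (nhds 0)) ∧
        (∀ f : C(Y, ℂ),
          Filter.Tendsto (fun l => ‖φ l (fun i => f (y l i)) - f‖)
            Filter.atTop (nhds 0)) := by
  classical
  letI : MetricSpace Y := TopologicalSpace.metrizableSpaceMetric Y
  -- nets
  obtain ⟨k, y, hk, hnet⟩ : ∃ (k : ℕ → ℕ) (y : ∀ l, Fin (k l) → Y),
      (∀ l, 0 < k l) ∧ ∀ l (p : Y), ∃ i, dist p (y l i) < 1 / (l + 1) := by
    choose k y hk hnet using fun l : ℕ => exists_net (Y := Y) (1 / (l + 1)) (eps_pos l)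
    exact ⟨k, y, hk, hnet⟩
  -- connecting maps
  choose g hg using fun (l : ℕ) (j : Fin (k (l + 1))) => hnet l (y (l + 1) j)
  -- positive maps
  choose φ hφ1 hφpos hφest using fun l : ℕ =>
    exists_phi (k l) (y l) (1 / (l + 1)) (hnet l)
  refine ⟨k, hk, y, fun l => compSAH (g l), φ, hφ1, hφpos, ?_, ?_⟩
  · -- intertwining
    intro f
    rw [Metric.tendsto_atTop]
    intro δ hδ
    obtain ⟨ε, hε, hmod⟩ := Metric.uniformContinuous_iff.1
      (CompactSpace.uniformContinuous_of_continuous f.continuous) (δ / 2) (by linarith)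
    obtain ⟨N, hN⟩ := (eventually_eps_lt hε).exists_forall_of_atTop
    refine ⟨N, fun l hl => ?_⟩
    rw [Real.dist_eq, sub_zero, abs_of_nonneg (norm_nonneg _)]
    have hb : ‖(compSAH (g l) (fun i => f (y l i))) - (fun i => f (y (l + 1) i))‖ ≤ δ / 2 := by
      refine (pi_norm_le_iff_of_nonneg (by linarith)).2 fun j => ?_
      have hd : dist (y (l + 1) j) (y l (g l j)) < ε := lt_trans (hg l j) (hN l hl)
      have := hmod hd
      rw [Pi.sub_apply]
      have h2 : compSAH (g l) (fun i => f (y l i)) j = f (y l (g l j)) := rfl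
      rw [h2, ← dist_eq_norm]
      exact le_of_lt (by rwa [dist_comm] at this)
    linarith
  · -- asymptotic inverse
    intro f
    rw [Metric.tendsto_atTop]
    intro δ hδ
    obtain ⟨ε, hε, hmod⟩ := Metric.uniformContinuous_iff.1
      (CompactSpace.uniformContinuous_of_continuous f.continuous) (δ / 2) (by linarith)
    obtain ⟨N, hN⟩ := (eventually_eps_lt hε).exists_forall_of_atTop
    refine ⟨N, fun l hl => ?_⟩
    rw [Real.dist_eq, sub_zero, abs_of_nonneg (norm_nonneg _)]
    have hb : ‖φ l (fun i => f (y l i)) - f‖ ≤ δ / 2 := by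
      refine hφest l f (δ / 2) (by linarith) fun p q hpq => ?_
      have := hmod (lt_trans hpq (hN l hl))
      rw [dist_eq_norm] at this
      rw [norm_sub_rev]
      linarith
    linarith
end

section
/- Let n ∈ ℕ and let Y be a nonempty compact metrizable space with the property that every finite open cover of Y admits a finite open refinement in which every point of Y belongs to at most n + 1 members of the refinement (i.e., the covering dimension of Y is at most n). Then for every ε > 0 and every finite subset F ⊆ C(Y, ℂ) there exist a positive integer k, points y₁, …, y_k ∈ Y, continuous functions h₁, …, h_k : Y → [0,1] with h₁ + ⋯ + h_k = 1, and a partition of {1, …, k} into n + 1 subsets S₀, …, S_n such that h_i h_j = 0 whenever i ≠ j lie in the same subset S_m, and ‖f − Σ_{j=1}^k f(y_j) h_j‖ < ε for all f ∈ F. (This is the 'moreover' clause of Proposition 2.3 of the paper: the approximating maps φ_l may be chosen n-decomposable.) -/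
/-- The 'moreover' clause of Proposition 2.3 of the paper: if `Y` is compact metrizable
of covering dimension at most `n`, then every finite subset of `C(Y)` can be
`ε`-approximated by `Σ f(y_j) h_j` for an `n`-decomposable partition of unity
`(h_j)` subordinate to points `y_j`. -/
theorem stmt_5 (n : ℕ) (Y : Type) [TopologicalSpace Y] [CompactSpace Y]
    [TopologicalSpace.MetrizableSpace Y] [Nonempty Y]
    (hdim : ∀ (m : ℕ) (U : Fin m → Set Y), (∀ i, IsOpen (U i)) → (∀ x, ∃ i, x ∈ U i) →
      ∃ (m' : ℕ) (V : Fin m' → Set Y), (∀ j, IsOpen (V j)) ∧ (∀ x, ∃ j, x ∈ V j) ∧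
        (∀ j, ∃ i, V j ⊆ U i) ∧ ∀ x : Y, Set.ncard {j | x ∈ V j} ≤ n + 1) :
    ∀ ε > (0 : ℝ), ∀ F : Finset C(Y, ℂ),
      ∃ k : ℕ, 0 < k ∧ ∃ (y : Fin k → Y) (h : Fin k → C(Y, ℝ)) (S : Fin k → Fin (n + 1)),
        (∀ j, ∀ p : Y, h j p ∈ Set.Icc (0 : ℝ) 1) ∧
        (∑ j, h j = 1) ∧
        (∀ i j, i ≠ j → S i = S j → h i * h j = 0) ∧
        ∀ f ∈ F, ‖f - ∑ j, f (y j) •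
          ((⟨Complex.ofReal, Complex.continuous_ofReal⟩ : C(ℝ, ℂ)).comp (h j))‖ < ε := by
  classical
  letI : MetricSpace Y := TopologicalSpace.metrizableSpaceMetric Y
  intro ε hε F
  -- uniform continuity: a single δ works for all f ∈ F
  have hUC : ∀ f : C(Y, ℂ), ∃ δ > 0, ∀ x y : Y, dist x y < δ → ‖f x - f y‖ < ε/2 := by
    intro f
    have h1 : UniformContinuous f := CompactSpace.uniformContinuous_of_continuous f.continuous
    rw [Metric.uniformContinuous_iff] at h1
    obtain ⟨δ, hδ, h2⟩ := h1 (ε/2) (by linarith)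
    exact ⟨δ, hδ, fun x y hxy => by simpa [dist_eq_norm] using h2 hxy⟩
  choose δf hδfpos hδf using hUC
  set δ : ℝ := (insert (1:ℝ) (F.image δf)).min' (by simp) with hδdef
  have hδmem : δ ∈ insert (1:ℝ) (F.image δf) := Finset.min'_mem _ _
  have hδpos : 0 < δ := by
    rcases Finset.mem_insert.1 hδmem with h | h
    · rw [h]; norm_num
    · obtain ⟨f, _, heq⟩ := Finset.mem_image.1 h; rw [← heq]; exact hδfpos f
  have hδle : ∀ f ∈ F, δ ≤ δf f := fun f hf =>
    Finset.min'_le _ _ (Finset.mem_insert.2 (Or.inr (Finset.mem_image_of_mem _ hf)))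
  -- finite subcover by balls of radius δ/2
  obtain ⟨t, ht⟩ := isCompact_univ.elim_finite_subcover (fun c : Y => Metric.ball c (δ/2))
    (fun c => Metric.isOpen_ball) (fun x _ => Set.mem_iUnion.2 ⟨x, Metric.mem_ball_self (by linarith)⟩)
  set m := t.card with hm
  set c : Fin m → Y := fun i => ((t.equivFin).symm i : Y) with hc
  have hUcover : ∀ x : Y, ∃ i, x ∈ Metric.ball (c i) (δ/2) := by
    intro x
    have := ht (Set.mem_univ x)
    simp only [Set.mem_iUnion] at this
    obtain ⟨z, hz, hxz⟩ := this
    exact ⟨t.equivFin ⟨z, hz⟩, by simpa [hc] using hxz⟩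
  obtain ⟨m', V, hVopen, hVcover, hVref, hVmult⟩ := hdim m (fun i => Metric.ball (c i) (δ/2))
    (fun _ => Metric.isOpen_ball) hUcover
  -- first partition of unity, subordinate to V
  obtain ⟨g, hg⟩ := PartitionOfUnity.exists_isSubordinate isClosed_univ V hVopen
    (fun x _ => Set.mem_iUnion.2 (hVcover x))
  have hgpos : ∀ j x, 0 < g j x → x ∈ V j := fun j x hx =>
    hg j (subset_tsupport _ (by simpa using hx.ne'))
  have hgsum : ∀ x : Y, ∑ j, g j x = 1 := by
    intro x
    have := g.sum_eq_one (Set.mem_univ x)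
    rwa [finsum_eq_sum_of_fintype] at this
  -- the combinatorial refinement W T
  set W : Finset (Fin m') → Set Y := fun T =>
    {x | T.Nonempty ∧ (∀ j ∈ T, 0 < g j x) ∧ ∀ j ∈ T, ∀ i ∉ T, g i x < g j x} with hW
  have hWsub : ∀ T, ∀ j ∈ T, W T ⊆ V j := fun T j hj x hx => hgpos j x (hx.2.1 j hj)
  have hWopen : ∀ T, IsOpen (W T) := by
    intro T
    by_cases hT : T.Nonempty
    · have : W T = (⋂ j ∈ T, {x | 0 < g j x}) ∩
          ⋂ j ∈ T, ⋂ i ∈ Tᶜ, {x | g i x < g j x} := by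
        ext x
        simp only [hW, Set.mem_setOf_eq, Set.mem_inter_iff, Set.mem_iInter, Finset.mem_compl]
        tauto
      rw [this]
      exact (isOpen_biInter_finset fun j _ => isOpen_lt continuous_const (g j).continuous).inter
        (isOpen_biInter_finset fun j _ => isOpen_biInter_finset fun i _ =>
          isOpen_lt (g i).continuous (g j).continuous)
    · have : W T = ∅ := by
        ext x; simp only [hW, Set.mem_setOf_eq, Set.mem_empty_iff_false, iff_false]
        exact fun h => hT h.1
      rw [this]; exact isOpen_empty
  have hWcard : ∀ T, (W T).Nonempty → 1 ≤ T.card ∧ T.card ≤ n + 1 := by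
    intro T ⟨x, hx⟩
    constructor
    · exact Finset.card_pos.2 hx.1
    · calc T.card = Set.ncard (↑T : Set (Fin m')) := (Set.ncard_coe_finset T).symm
        _ ≤ Set.ncard {j | x ∈ V j} := Set.ncard_le_ncard
            (fun j hj => hgpos j x (hx.2.1 j hj)) (Set.toFinite _)
        _ ≤ n + 1 := hVmult x
  have hWcover : ∀ x : Y, ∃ T, x ∈ W T := by
    intro x
    refine ⟨Finset.univ.filter (fun j => 0 < g j x), ?_, ?_, ?_⟩
    · by_contra hne
      rw [Finset.not_nonempty_iff_eq_empty, Finset.filter_eq_empty_iff] at hne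
      have : ∑ j, g j x = 0 := Finset.sum_eq_zero fun j _ =>
        le_antisymm (not_lt.1 (hne (Finset.mem_univ j))) (g.nonneg j x)
      rw [hgsum x] at this; norm_num at this
    · intro j hj; exact (Finset.mem_filter.1 hj).2
    · intro j hj i hi
      have h1 : g i x = 0 := le_antisymm
        (not_lt.1 fun h => hi (Finset.mem_filter.2 ⟨Finset.mem_univ i, h⟩)) (g.nonneg i x)
      rw [h1]; exact (Finset.mem_filter.1 hj).2
  have hWdisj : ∀ T T', T ≠ T' → T.card = T'.card → W T ∩ W T' = ∅ := by
    intro T T' hne hcard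
    ext x
    simp only [Set.mem_inter_iff, Set.mem_empty_iff_false, iff_false, not_and]
    intro hxT hxT'
    have hTT' : ¬ T ⊆ T' := fun hsub => hne (Finset.eq_of_subset_of_card_le hsub hcard.ge)
    have hT'T : ¬ T' ⊆ T := fun hsub => hne (Finset.eq_of_subset_of_card_le hsub hcard.le).symm
    obtain ⟨j, hjT, hjT'⟩ := Finset.not_subset.1 hTT'
    obtain ⟨j', hj'T', hj'T⟩ := Finset.not_subset.1 hT'T
    have h1 : g j' x < g j x := hxT.2.2 j hjT j' hj'T
    have h2 : g j x < g j' x := hxT'.2.2 j' hj'T' j hjT'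
    linarith
  -- second partition of unity, subordinate to W
  obtain ⟨h', hh'⟩ := PartitionOfUnity.exists_isSubordinate isClosed_univ W hWopen
    (fun x _ => Set.mem_iUnion.2 (hWcover x))
  have hh'pos : ∀ T x, h' T x ≠ 0 → x ∈ W T := fun T x hx =>
    hh' T (subset_tsupport _ (by simpa using hx))
  have hh'sum : ∀ x : Y, ∑ T, h' T x = 1 := by
    intro x
    have := h'.sum_eq_one (Set.mem_univ x)
    rwa [finsum_eq_sum_of_fintype] at this
  -- choose points
  set y' : Finset (Fin m') → Y := fun T =>
    if hT : (W T).Nonempty then hT.some else Classical.arbitrary Y with hy'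
  have hy'mem : ∀ T, (W T).Nonempty → y' T ∈ W T := by
    intro T hT; simp only [hy', dif_pos hT]; exact hT.some_mem
  -- colors
  set S' : Finset (Fin m') → Fin (n + 1) := fun T => ⟨min (T.card - 1) n, by omega⟩ with hS'
  -- reindex by Fin k
  set k := Fintype.card (Finset (Fin m')) with hk
  have hkpos : 0 < k := Fintype.card_pos
  set e : Fin k ≃ Finset (Fin m') := (Fintype.equivFin (Finset (Fin m'))).symm with he
  refine ⟨k, hkpos, fun i => y' (e i), fun i => h' (e i), fun i => S' (e i), ?_, ?_, ?_, ?_⟩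
  · exact fun i p => ⟨h'.nonneg (e i) p, h'.le_one (e i) p⟩
  · ext x
    have := hh'sum x
    rw [← Equiv.sum_comp e (fun T => h' T x)] at this
    simpa using this
  · intro i j hij hS
    have hne : e i ≠ e j := fun hcon => hij (e.injective hcon)
    ext x
    simp only [ContinuousMap.mul_apply, ContinuousMap.coe_mk, ContinuousMap.zero_apply]
    by_contra hcon
    have h1 : h' (e i) x ≠ 0 := fun h0 => hcon (by simp [h0])
    have h2 : h' (e j) x ≠ 0 := fun h0 => hcon (by simp [h0])
    have hx1 := hh'pos _ _ h1
    have hx2 := hh'pos _ _ h2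
    have hc1 := hWcard _ ⟨x, hx1⟩
    have hc2 := hWcard _ ⟨x, hx2⟩
    have hcards : (e i).card = (e j).card := by
      have := Fin.val_eq_val (S' (e i)) (S' (e j)) |>.2 hS
      simp only [hS'] at this
      omega
    have := hWdisj _ _ hne hcards
    rw [Set.eq_empty_iff_forall_notMem] at this
    exact this x ⟨hx1, hx2⟩
  · intro f hf
    have key : ∀ x : Y, ‖f x - ∑ T, (f (y' T)) * ((h' T x : ℝ) : ℂ)‖ ≤ ε/2 := by
      intro x
      have hfx : f x = ∑ T, (f x) * ((h' T x : ℝ) : ℂ) := by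
        rw [← Finset.mul_sum]
        have : (∑ T, ((h' T x : ℝ) : ℂ)) = ((∑ T, h' T x : ℝ) : ℂ) := by push_cast; ring
        rw [this, hh'sum x]; push_cast; ring
      rw [hfx, ← Finset.sum_sub_distrib]
      have hterm : ∀ T : Finset (Fin m'), T ∈ Finset.univ →
          ‖f x * ((h' T x : ℝ) : ℂ) - f (y' T) * ((h' T x : ℝ) : ℂ)‖ ≤ (ε/2) * h' T x := by
        intro T _
        rw [← sub_mul]
        rw [norm_mul]
        by_cases h0 : h' T x = 0
        · simp [h0]
        · have hxW := hh'pos T x h0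
          have hWne : (W T).Nonempty := ⟨x, hxW⟩
          have hyW := hy'mem T hWne
          obtain ⟨j, hj⟩ := hxW.1
          obtain ⟨i, hVi⟩ := hVref j
          have hx' := hVi (hWsub T j hj hxW)
          have hy'' := hVi (hWsub T j hj hyW)
          have hdist : dist x (y' T) < δ := by
            have d1 : dist x (c i) < δ/2 := Metric.mem_ball.1 hx'
            have d2 : dist (y' T) (c i) < δ/2 := Metric.mem_ball.1 hy''
            calc dist x (y' T) ≤ dist x (c i) + dist (y' T) (c i) := dist_triangle_right _ _ _
              _ < δ := by linarith
          have hnorm : ‖f x - f (y' T)‖ < ε/2 :=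
            hδf f x (y' T) (lt_of_lt_of_le hdist (hδle f hf))
          have habs : ‖((h' T x : ℝ) : ℂ)‖ = h' T x := by
            rw [Complex.norm_real, Real.norm_eq_abs, abs_of_nonneg (h'.nonneg T x)]
          rw [habs]
          exact mul_le_mul hnorm.le le_rfl (h'.nonneg T x) (by linarith)
      calc ‖∑ T, (f x * ((h' T x : ℝ) : ℂ) - f (y' T) * ((h' T x : ℝ) : ℂ))‖
          ≤ ∑ T, ‖f x * ((h' T x : ℝ) : ℂ) - f (y' T) * ((h' T x : ℝ) : ℂ)‖ :=
            norm_sum_le _ _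
        _ ≤ ∑ T, (ε/2) * h' T x := Finset.sum_le_sum hterm
        _ = ε/2 := by rw [← Finset.mul_sum, hh'sum x, mul_one]
    have hle : ‖f - ∑ j, f (y' (e j)) •
        ((⟨Complex.ofReal, Complex.continuous_ofReal⟩ : C(ℝ, ℂ)).comp (h' (e j)))‖ ≤ ε/2 := by
      apply ContinuousMap.norm_le _ (by linarith) |>.2
      intro x
      have heq : (f - ∑ j, f (y' (e j)) •
          ((⟨Complex.ofReal, Complex.continuous_ofReal⟩ : C(ℝ, ℂ)).comp (h' (e j)))) x
          = f x - ∑ T, (f (y' T)) * ((h' T x : ℝ) : ℂ) := by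
        simp only [ContinuousMap.sub_apply, ContinuousMap.sum_apply, ContinuousMap.smul_apply,
          ContinuousMap.comp_apply, ContinuousMap.coe_mk, smul_eq_mul]
        congr 1
        exact Equiv.sum_comp e (fun T => f (y' T) * ((h' T x : ℝ) : ℂ))
      rw [heq]
      exact key x
    exact lt_of_le_of_lt hle (by linarith)
end

section
/- Let A be a simple unital C*-algebra, i.e., the only closed two-sided ideals of A are {0} and A, and let a ∈ A be a nonzero positive element. Then there exists s > 0 such that every tracial state τ on A satisfies τ(a) ≥ s (τ(a) is a real number since a is positive). (This is the claim, used in the proof of Proposition 3.3 of the paper, that inf{τ(a) : τ ∈ T(A)} > 0 for nonzero positive a in a simple unital C*-algebra.) -/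
set_option linter.unusedSectionVars false
set_option maxHeartbeats 1000000

open scoped ComplexOrder

section Helpers
open scoped ComplexOrder

variable {A : Type*} [NormedRing A] [StarRing A] [CStarRing A] [NormedAlgebra ℂ A]
    [StarModule ℂ A] [CompleteSpace A]

lemma aux_expand (τ : A →ₗ[ℂ] ℂ) (c : ℂ) (x y : A) :
    τ (star (x + c • y) * (x + c • y)) =
      τ (star x * x) + c * τ (star x * y) + (starRingEnd ℂ c) * τ (star y * x)
        + (c * starRingEnd ℂ c) * τ (star y * y) := by
  have : star (x + c • y) * (x + c • y) = star x * x + c • (star x * y)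
      + (starRingEnd ℂ c) • (star y * x) + (c * (starRingEnd ℂ c)) • (star y * y) := by
    simp only [star_add, star_smul, Complex.star_def, mul_add, add_mul, smul_mul_assoc, mul_smul_comm, smul_smul]
    module
  rw [this]
  simp only [map_add, map_smul, smul_eq_mul]

lemma aux_im (τ : A →ₗ[ℂ] ℂ) (hτpos : ∀ x : A, 0 ≤ τ (star x * x)) (x : A) :
    (τ (star x * x)).im = 0 := ((Complex.nonneg_iff.mp (hτpos x)).2).symm

lemma aux_re (τ : A →ₗ[ℂ] ℂ) (hτpos : ∀ x : A, 0 ≤ τ (star x * x)) (x : A) :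
    0 ≤ (τ (star x * x)).re := (Complex.nonneg_iff.mp (hτpos x)).1

lemma aux_herm (τ : A →ₗ[ℂ] ℂ) (hτpos : ∀ x : A, 0 ≤ τ (star x * x)) (x y : A) :
    τ (star y * x) = starRingEnd ℂ (τ (star x * y)) := by
  have h1 := aux_im τ hτpos (x + (1:ℂ) • y)
  have h2 := aux_im τ hτpos (x + Complex.I • y)
  rw [aux_expand] at h1 h2
  simp only [Complex.add_im, Complex.mul_im, Complex.one_re, Complex.one_im, map_one,
    Complex.I_re, Complex.I_im, Complex.conj_I, Complex.neg_re, Complex.neg_im, Complex.mul_re,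
    aux_im τ hτpos x, aux_im τ hτpos y] at h1 h2
  apply Complex.ext <;> simp only [Complex.conj_re, Complex.conj_im] <;> linarith
lemma aux_cs (τ : A →ₗ[ℂ] ℂ) (hτpos : ∀ x : A, 0 ≤ τ (star x * x)) (x y : A) :
    ‖τ (star x * y)‖ ^ 2 ≤ (τ (star x * x)).re * (τ (star y * y)).re := by
  set p := τ (star x * y) with hp
  set N := Complex.normSq p with hN
  have hNnn : 0 ≤ N := Complex.normSq_nonneg p
  have key : ∀ r : ℝ, 0 ≤ (τ (star x * x)).re - 2 * r * N + r ^ 2 * N * (τ (star y * y)).re := by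
    intro r
    have h := aux_re τ hτpos (x + (-(r:ℂ) * starRingEnd ℂ p) • y)
    rw [aux_expand] at h
    rw [aux_herm τ hτpos x y, ← hp] at h
    have e1 : (-(r:ℂ) * starRingEnd ℂ p) * p = -(r:ℂ) * (N : ℂ) := by
      rw [hN, mul_assoc]
      congr 1
      rw [mul_comm]
      exact Complex.mul_conj p
    have e2 : starRingEnd ℂ (-(r:ℂ) * starRingEnd ℂ p) = -(r:ℂ) * p := by simp
    rw [e1, e2] at h
    have e3 : (-(r:ℂ) * p) * starRingEnd ℂ p = -(r:ℂ) * (N:ℂ) := by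
      rw [mul_assoc, Complex.mul_conj, hN]
    have e4 : (-(r:ℂ) * starRingEnd ℂ p) * (-(r:ℂ) * p) = ((r:ℝ)^2 * N : ℝ) := by
      push_cast
      rw [hN, ← Complex.mul_conj p]
      ring
    rw [e3, e4] at h
    simp only [Complex.add_re, Complex.mul_re, Complex.neg_re, Complex.neg_im,
      Complex.ofReal_re, Complex.ofReal_im, aux_im τ hτpos x, aux_im τ hτpos y,
      Complex.mul_im] at h
    nlinarith [h]
  have hd := discrim_le_zero (a := N * (τ (star y * y)).re) (b := -2 * N)
      (c := (τ (star x * x)).re) (fun r => by nlinarith [key r])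
  rw [discrim] at hd
  rw [Complex.sq_norm, ← hN]
  rcases eq_or_lt_of_le hNnn with hz | hNpos
  · rw [← hz]
    exact mul_nonneg (aux_re τ hτpos x) (aux_re τ hτpos y)
  · nlinarith [hd, hNpos]
lemma aux_cone (τ : A →ₗ[ℂ] ℂ) (hτpos : ∀ x : A, 0 ≤ τ (star x * x)) (u : A)
    (hu : u ∈ AddSubmonoid.closure (Set.range fun s : A => star s * s)) (c : A) :
    0 ≤ τ (c * u * star c) := by
  induction hu using AddSubmonoid.closure_induction with
  | mem z hz =>
    obtain ⟨s, rfl⟩ := hz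
    have := hτpos (s * star c)
    have e : c * (star s * s) * star c = star (s * star c) * (s * star c) := by
      simp [star_mul, mul_assoc]
    rw [e]
    exact this
  | zero => simp
  | add z w _ _ hz hw =>
    have e : c * (z + w) * star c = c * z * star c + c * w * star c := by noncomm_ring
    rw [e, map_add]
    exact add_nonneg hz hw

-- conjugation bound: τ (c * (star x * x) * star c) ≤ ‖x‖² τ(star c * c) in ℂ-order
lemma aux_conj (τ : A →ₗ[ℂ] ℂ) (hτpos : ∀ x : A, 0 ≤ τ (star x * x))
    (hτtr : ∀ x y, τ (x * y) = τ (y * x)) (c x : A) :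
    τ (c * (star x * x) * star c) ≤ ((‖x‖ : ℂ) ^ 2) * τ (star c * c) := by
  letI : CStarAlgebra A := { }
  letI := CStarAlgebra.spectralOrder A
  haveI := CStarAlgebra.spectralOrderedRing A
  have hle : star x * x ≤ algebraMap ℝ A (‖x‖ ^ 2) :=
    CStarAlgebra.star_mul_le_algebraMap_norm_sq
  obtain ⟨p, hp, hep⟩ := (StarOrderedRing.le_iff _ _).mp hle
  have h0 : 0 ≤ τ (c * p * star c) := aux_cone τ hτpos p hp c
  have e : c * algebraMap ℝ A (‖x‖ ^ 2) * star c = ((‖x‖:ℂ)^2) • (c * star c) := by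
    rw [IsScalarTower.algebraMap_apply ℝ ℂ A, Algebra.algebraMap_eq_smul_one, mul_smul_comm,
      smul_mul_assoc, mul_one]
    congr 1
    push_cast
    rfl
  have e2 : c * (algebraMap ℝ A (‖x‖^2)) * star c
      = c * (star x * x) * star c + c * p * star c := by rw [hep]; noncomm_ring
  calc τ (c * (star x * x) * star c)
      ≤ τ (c * (star x * x) * star c) + τ (c * p * star c) := le_add_of_nonneg_right h0
    _ = τ (c * algebraMap ℝ A (‖x‖^2) * star c) := by rw [e2, map_add]
    _ = ((‖x‖:ℂ)^2) * τ (c * star c) := by rw [e, map_smul, smul_eq_mul]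
    _ = ((‖x‖:ℂ)^2) * τ (star c * c) := by rw [hτtr]
lemma aux_factor1 (τ : A →ₗ[ℂ] ℂ) (hτpos : ∀ x : A, 0 ≤ τ (star x * x))
    (hτtr : ∀ x y, τ (x * y) = τ (y * x)) (c x : A) :
    τ (x * (star c * c) * star x) ≤ ((‖x‖ : ℂ) ^ 2) * τ (star c * c) := by
  have e : τ (x * (star c * c) * star x) = τ (c * (star x * x) * star c) := by
    have : x * (star c * c) * star x = (x * star c) * (c * star x) := by noncomm_ring
    rw [this, hτtr]
    congr 1
    noncomm_ring
  rw [e]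
  exact aux_conj τ hτpos hτtr c x

lemma aux_factor2 (τ : A →ₗ[ℂ] ℂ) (hτpos : ∀ x : A, 0 ≤ τ (star x * x))
    (hτtr : ∀ x y, τ (x * y) = τ (y * x)) (c y : A) :
    τ (star y * (star c * c) * y) ≤ ((‖y‖ : ℂ) ^ 2) * τ (star c * c) := by
  have e : τ (star y * (star c * c) * y) = τ (c * (star (star y) * star y) * star c) := by
    have : star y * (star c * c) * y = (star y * star c) * (c * y) := by noncomm_ring
    rw [this, hτtr]
    congr 1
    simp only [star_star]
    noncomm_ring
  rw [e]
  calc τ (c * (star (star y) * star y) * star c)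
      ≤ ((‖star y‖ : ℂ) ^ 2) * τ (star c * c) := aux_conj τ hτpos hτtr c (star y)
    _ = ((‖y‖ : ℂ) ^ 2) * τ (star c * c) := by rw [norm_star]

lemma aux_gen (τ : A →ₗ[ℂ] ℂ) (hτpos : ∀ x : A, 0 ≤ τ (star x * x))
    (hτtr : ∀ x y, τ (x * y) = τ (y * x)) (c x y : A) :
    ‖τ (x * (star c * c) * y)‖ ≤ (‖x‖ * ‖y‖) * (τ (star c * c)).re := by
  have hre := aux_re τ hτpos c
  have him := aux_im τ hτpos c
  have e : x * (star c * c) * y = star (c * star x) * (c * y) := by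
    simp only [star_mul, star_star]
    noncomm_ring
  have hcs := aux_cs τ hτpos (c * star x) (c * y)
  rw [← e] at hcs
  -- first factor
  have e1 : star (c * star x) * (c * star x) = x * (star c * c) * star x := by
    simp only [star_mul, star_star]; noncomm_ring
  have e2 : star (c * y) * (c * y) = star y * (star c * c) * y := by
    simp only [star_mul]; noncomm_ring
  rw [e1, e2] at hcs
  have f1 := aux_factor1 τ hτpos hτtr c x
  have f2 := aux_factor2 τ hτpos hτtr c y
  have f1' : (τ (x * (star c * c) * star x)).re ≤ ‖x‖ ^ 2 * (τ (star c * c)).re := by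
    have := (Complex.le_def.mp f1).1
    simpa [Complex.mul_re, him, ← Complex.ofReal_pow] using this
  have f2' : (τ (star y * (star c * c) * y)).re ≤ ‖y‖ ^ 2 * (τ (star c * c)).re := by
    have := (Complex.le_def.mp f2).1
    simpa [Complex.mul_re, him, ← Complex.ofReal_pow] using this
  have habs : 0 ≤ ‖τ (x * (star c * c) * y)‖ := norm_nonneg _
  have hM : 0 ≤ ‖x‖ * ‖y‖ * (τ (star c * c)).re :=
    mul_nonneg (mul_nonneg (norm_nonneg x) (norm_nonneg y)) hre
  -- nonnegativity of the two factors
  have g1 : 0 ≤ (τ (x * (star c * c) * star x)).re := by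
    have : 0 ≤ (τ (star (c * star x) * (c * star x))).re := aux_re τ hτpos _
    rwa [e1] at this
  have g2 : 0 ≤ (τ (star y * (star c * c) * y)).re := by
    have : 0 ≤ (τ (star (c * y) * (c * y))).re := aux_re τ hτpos _
    rwa [e2] at this
  nlinarith [hcs, mul_le_mul f1' f2' g2 (by positivity : (0:ℝ) ≤ ‖x‖ ^ 2 * (τ (star c * c)).re),
    sq_nonneg (‖x‖ * ‖y‖ * (τ (star c * c)).re)]

lemma aux_norm (τ : A →ₗ[ℂ] ℂ) (hτ1 : τ 1 = 1) (hτpos : ∀ x : A, 0 ≤ τ (star x * x))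
    (hτtr : ∀ x y, τ (x * y) = τ (y * x)) (z : A) : ‖τ z‖ ≤ ‖z‖ := by
  have hcs := aux_cs τ hτpos 1 z
  have hb := aux_conj τ hτpos hτtr 1 z
  simp only [star_one, one_mul, mul_one, hτ1] at hcs hb
  -- hb : τ (star z * z) ≤ ↑‖z‖ ^ 2 * 1  (or similar)
  have hb' : (τ (star z * z)).re ≤ ‖z‖ ^ 2 := by
    have := (Complex.le_def.mp hb).1
    simpa [Complex.mul_re, ← Complex.ofReal_pow] using this
  have hre1 : ((1 : ℂ)).re = 1 := by simp
  rw [hre1, one_mul] at hcs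
  nlinarith [norm_nonneg (τ z), norm_nonneg z, hcs, hb']

end Helpers

/-- The claim used in the proof of Proposition 3.3 of the paper: in a simple unital
C*-algebra (the only closed two-sided ideals are `{0}` and the whole algebra), every
nonzero positive element is bounded below, uniformly, on the tracial state space:
`inf {τ(a) : τ ∈ T(A)} > 0`. -/
theorem stmt_8 {A : Type*} [NormedRing A] [StarRing A] [CStarRing A] [NormedAlgebra ℂ A]
    [StarModule ℂ A] [CompleteSpace A]
    (hsimple : ∀ I : TwoSidedIdeal A, IsClosed (I : Set A) → I = ⊥ ∨ I = ⊤)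
    (a : A) (ha : a ≠ 0) (hpos : ∃ c, a = star c * c) :
    ∃ s : ℝ, 0 < s ∧
      ∀ τ : A →ₗ[ℂ] ℂ, τ 1 = 1 → (∀ x, 0 ≤ τ (star x * x)) →
        (∀ x y, τ (x * y) = τ (y * x)) → (s : ℂ) ≤ τ a := by
  obtain ⟨c, rfl⟩ := hpos
  set a := star c * c with ha_def
  -- the algebraic two-sided ideal generated by a
  set genSet : Set A := {z | ∃ x y : A, z = x * a * y} with hgen
  set S : Submodule ℂ A := Submodule.span ℂ genSet with hS
  have hleft : ∀ w : A, ∀ b ∈ S, w * b ∈ S := by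
    intro w b hb
    induction hb using Submodule.span_induction with
    | mem z hz =>
      obtain ⟨x, y, rfl⟩ := hz
      exact Submodule.subset_span ⟨w * x, y, by noncomm_ring⟩
    | zero => simp
    | add u v _ _ hu hv => rw [mul_add]; exact S.add_mem hu hv
    | smul t u _ hu => rw [mul_smul_comm]; exact S.smul_mem t hu
  have hright : ∀ w : A, ∀ b ∈ S, b * w ∈ S := by
    intro w b hb
    induction hb using Submodule.span_induction with
    | mem z hz =>
      obtain ⟨x, y, rfl⟩ := hz
      exact Submodule.subset_span ⟨x, y * w, by noncomm_ring⟩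
    | zero => simp
    | add u v _ _ hu hv => rw [add_mul]; exact S.add_mem hu hv
    | smul t u _ hu => rw [smul_mul_assoc]; exact S.smul_mem t hu
  set T := S.topologicalClosure with hT
  have hTcoe : (T : Set A) = closure (S : Set A) := rfl
  set I : TwoSidedIdeal A := TwoSidedIdeal.mk' (T : Set A)
    T.zero_mem (fun hx hy => T.add_mem hx hy) (fun hx => T.neg_mem hx)
    (by
      intro x y hy
      have hy' : y ∈ closure (S : Set A) := hy
      show x * y ∈ closure (S : Set A)
      exact Set.MapsTo.closure (fun z hz => hleft x z hz) (continuous_mul_left x) hy')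
    (by
      intro x y hx
      have hx' : x ∈ closure (S : Set A) := hx
      show x * y ∈ closure (S : Set A)
      exact Set.MapsTo.closure (fun z hz => hright y z hz) (continuous_mul_right y) hx')
    with hI
  have hIclosed : IsClosed (I : Set A) := by
    rw [hI, TwoSidedIdeal.coe_mk']
    exact S.isClosed_topologicalClosure
  have haI : a ∈ I := by
    rw [hI, TwoSidedIdeal.mem_mk']
    exact Submodule.le_topologicalClosure S (Submodule.subset_span ⟨1, 1, by noncomm_ring⟩)
  have hItop : I = ⊤ := by
    rcases hsimple I hIclosed with hbot | htop
    · exfalso; exact ha ((TwoSidedIdeal.mem_bot A).mp (hbot ▸ haI))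
    · exact htop
  have h1I : (1 : A) ∈ closure (S : Set A) := by
    have : (1 : A) ∈ I := hItop ▸ TwoSidedIdeal.mem_top A
    rwa [hI, TwoSidedIdeal.mem_mk'] at this
  obtain ⟨b, hbS, hdist⟩ := Metric.mem_closure_iff.mp h1I (1/2) (by norm_num)
  rw [dist_eq_norm] at hdist
  -- bound on τ b uniformly over tracial states
  have hbound : ∃ C : ℝ, 0 ≤ C ∧ ∀ τ : A →ₗ[ℂ] ℂ, (∀ x, 0 ≤ τ (star x * x)) →
      (∀ x y, τ (x * y) = τ (y * x)) → ‖τ b‖ ≤ C * (τ a).re := by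
    clear hdist
    induction hbS using Submodule.span_induction with
    | mem z hz =>
      obtain ⟨x, y, rfl⟩ := hz
      refine ⟨‖x‖ * ‖y‖, mul_nonneg (norm_nonneg x) (norm_nonneg y), fun τ hτpos hτtr => ?_⟩
      exact aux_gen τ hτpos hτtr c x y
    | zero => exact ⟨0, le_refl 0, fun τ _ _ => by simp⟩
    | add u v _ _ hu hv =>
      obtain ⟨C1, hC1, h1⟩ := hu
      obtain ⟨C2, hC2, h2⟩ := hv
      refine ⟨C1 + C2, add_nonneg hC1 hC2, fun τ hτpos hτtr => ?_⟩
      calc ‖τ (u + v)‖ ≤ ‖τ u‖ + ‖τ v‖ := by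
            rw [map_add]; exact norm_add_le _ _
        _ ≤ C1 * (τ a).re + C2 * (τ a).re := add_le_add (h1 τ hτpos hτtr) (h2 τ hτpos hτtr)
        _ = (C1 + C2) * (τ a).re := by ring
    | smul t u _ hu =>
      obtain ⟨C, hC, h⟩ := hu
      refine ⟨‖t‖ * C, mul_nonneg (norm_nonneg t) hC, fun τ hτpos hτtr => ?_⟩
      rw [map_smul, smul_eq_mul, norm_mul, mul_assoc]
      exact mul_le_mul_of_nonneg_left (h τ hτpos hτtr) (norm_nonneg t)
  obtain ⟨C, hC, hCb⟩ := hbound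
  refine ⟨1 / (2 * (C + 1)), by positivity, fun τ hτ1 hτpos hτtr => ?_⟩
  have hre : 0 ≤ (τ a).re := aux_re τ hτpos c
  have him : (τ a).im = 0 := aux_im τ hτpos c
  have hτb := hCb τ hτpos hτtr
  have hnb : ‖τ (1 - b)‖ ≤ ‖(1:A) - b‖ := aux_norm τ hτ1 hτpos hτtr _
  have h1eq : (1 : ℝ) ≤ ‖τ b‖ + ‖τ (1 - b)‖ := by
    have : τ (1 : A) = τ b + τ (1 - b) := by rw [← map_add]; congr 1; abel
    calc (1:ℝ) = ‖τ 1‖ := by rw [hτ1]; simp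
      _ = ‖τ b + τ (1 - b)‖ := by rw [this]
      _ ≤ _ := norm_add_le _ _
  have hkey : 1/2 ≤ C * (τ a).re := by
    have := hdist
    linarith [hτb, hnb, h1eq]
  have hfin : 1 / (2 * (C + 1)) ≤ (τ a).re := by
    rw [div_le_iff₀ (by positivity)]
    nlinarith [hkey, hre, hC]
  rw [Complex.le_def]
  constructor
  · rw [Complex.ofReal_re]; exact hfin
  · simp [him]
end
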